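/- arXiv:1412.0290 — 4 statements merged into one kernel-verified Lean document; each statement's English description precedes it below -/
import Mathlib

section
/- Let e_1, …, e_n be integers with each e_i ≥ 2. Then ∑_{i=1}^n (1 − 1/e_i) < 2 if and only if the multiset {e_1,…,e_n} is empty, or of the form {e}, {e_1,e_2}, {2,2,e}, {2,3,3}, {2,3,4}, or {2,3,5}. -/
lemma perm3 (a b c : ℕ) :
    ∃ x y z, x ≤ y ∧ y ≤ z ∧ ({a, b, c} : Multiset ℕ) = {x, y, z} := by
  have swap12 : ∀ u v w : ℕ, ({u, v, w} : Multiset ℕ) = {v, u, w} := by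
    intro u v w; exact Multiset.cons_swap u v _
  have swap23 : ∀ u v w : ℕ, ({u, v, w} : Multiset ℕ) = {u, w, v} := by
    intro u v w; exact congrArg (u ::ₘ ·) (Multiset.cons_swap v w _)
  rcases le_total a b with hab | hab
  · rcases le_total b c with hbc | hbc
    · exact ⟨a, b, c, hab, hbc, rfl⟩
    · rcases le_total a c with hac | hac
      · exact ⟨a, c, b, hac, hbc, swap23 a b c⟩
      · exact ⟨c, a, b, hac, hab, by rw [swap23 a b c, swap12 a c b]⟩
  · rcases le_total a c with hac | hac
    · exact ⟨b, a, c, hab, hac, swap12 a b c⟩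
    · rcases le_total b c with hbc | hbc
      · exact ⟨b, c, a, hbc, hac, by rw [swap12 a b c, swap23 b a c]⟩
      · exact ⟨c, b, a, hbc, hab, by rw [swap12 a b c, swap23 b a c, swap12 b c a]⟩

lemma inv_le_inv_nat {m n : ℕ} (hm : 0 < m) (h : m ≤ n) : ((n:ℚ))⁻¹ ≤ ((m:ℚ))⁻¹ := by
  have := one_div_le_one_div_of_le (show (0:ℚ) < m by exact_mod_cast hm)
    (show (m:ℚ) ≤ n by exact_mod_cast h)
  simpa [one_div] using this

lemma key3 (x y z : ℕ) (hx : 2 ≤ x) (hxy : x ≤ y) (hyz : y ≤ z)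
    (h : 1 < ((x:ℚ))⁻¹ + ((y:ℚ))⁻¹ + ((z:ℚ))⁻¹) :
    (x = 2 ∧ y = 2) ∨ (x = 2 ∧ y = 3 ∧ z = 3) ∨ (x = 2 ∧ y = 3 ∧ z = 4) ∨
      (x = 2 ∧ y = 3 ∧ z = 5) := by
  have hx2 : x = 2 := by
    by_contra hne
    have h3 : 3 ≤ x := lt_of_le_of_ne hx (Ne.symm hne)
    have h1 := inv_le_inv_nat (by norm_num) h3
    have h2 := inv_le_inv_nat (by norm_num) (le_trans h3 hxy)
    have h4 := inv_le_inv_nat (by norm_num) (le_trans (le_trans h3 hxy) hyz)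
    norm_num at h1 h2 h4
    linarith
  subst hx2
  have hy4 : y ≤ 3 := by
    by_contra hne
    have h4 : 4 ≤ y := by omega
    have h1 := inv_le_inv_nat (by norm_num) h4
    have h2 := inv_le_inv_nat (by norm_num) (le_trans h4 hyz)
    norm_num at h1 h2
    norm_num at h
    linarith
  interval_cases y
  · exact Or.inl ⟨rfl, rfl⟩
  · have hz6 : z < 6 := by
      by_contra hne
      have h6 : 6 ≤ z := by omega
      have h1 := inv_le_inv_nat (by norm_num) h6
      norm_num at h1
      norm_num at h
      linarith
    interval_cases z
    · exact Or.inr (Or.inl ⟨rfl, rfl, rfl⟩)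
    · exact Or.inr (Or.inr (Or.inl ⟨rfl, rfl, rfl⟩))
    · exact Or.inr (Or.inr (Or.inr ⟨rfl, rfl, rfl⟩))

theorem stmt0aux (M : Multiset ℕ) (hM : ∀ e ∈ M, 2 ≤ e) :
    (Multiset.map (fun e : ℕ => 1 - 1 / (e : ℚ)) M).sum < 2 ↔
      M = 0 ∨ (∃ e, M = {e}) ∨ (∃ e₁ e₂, M = {e₁, e₂}) ∨
      (∃ e, M = {2, 2, e}) ∨ M = {2, 3, 3} ∨ M = {2, 3, 4} ∨ M = {2, 3, 5} := by
  have hpos : ∀ e ∈ M, (0:ℚ) < ((e:ℚ))⁻¹ := by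
    intro e he
    have := hM e he
    positivity
  constructor
  · intro h
    have hcard : M.card ≤ 3 := by
      by_contra hc
      have h4 : 4 ≤ M.card := by omega
      have hb : ∀ q ∈ Multiset.map (fun e : ℕ => 1 - 1/(e:ℚ)) M, (1/2 : ℚ) ≤ q := by
        intro q hq
        obtain ⟨e, he, rfl⟩ := Multiset.mem_map.mp hq
        have h2 : 2 ≤ e := hM e he
        have hh := inv_le_inv_nat (show 0 < 2 by norm_num) h2
        norm_num at hh
        simp only [one_div]
        linarith
      have := Multiset.card_nsmul_le_sum hb
      rw [Multiset.card_map] at this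
      have : (M.card : ℚ) * (1/2) ≤ (Multiset.map (fun e : ℕ => 1 - 1/(e:ℚ)) M).sum := by
        simpa [nsmul_eq_mul] using this
      have h4q : (4:ℚ) ≤ (M.card : ℚ) := by exact_mod_cast h4
      linarith
    interval_cases hc : M.card
    · exact Or.inl (Multiset.card_eq_zero.mp hc)
    · obtain ⟨a, ha⟩ := Multiset.card_eq_one.mp hc
      exact Or.inr (Or.inl ⟨a, ha⟩)
    · obtain ⟨a, b, hab⟩ := Multiset.card_eq_two.mp hc
      exact Or.inr (Or.inr (Or.inl ⟨a, b, hab⟩))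
    · obtain ⟨a, b, c, habc⟩ := Multiset.card_eq_three.mp hc
      obtain ⟨x, y, z, hxy, hyz, hperm⟩ := perm3 a b c
      rw [habc, hperm] at h hM
      have hx : 2 ≤ x := hM x (by simp)
      have hsum : 1 < ((x:ℚ))⁻¹ + ((y:ℚ))⁻¹ + ((z:ℚ))⁻¹ := by
        simp only [Multiset.insert_eq_cons, Multiset.map_cons, Multiset.map_singleton,
          Multiset.sum_cons, Multiset.sum_singleton, one_div] at h
        linarith
      rcases key3 x y z hx hxy hyz hsum with ⟨h1, h2⟩ | ⟨h1, h2, h3⟩ | ⟨h1, h2, h3⟩ | ⟨h1, h2, h3⟩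
      · subst h1; subst h2
        exact Or.inr (Or.inr (Or.inr (Or.inl ⟨z, by rw [habc, hperm]⟩)))
      · subst h1; subst h2; subst h3
        exact Or.inr (Or.inr (Or.inr (Or.inr (Or.inl (by rw [habc, hperm])))))
      · subst h1; subst h2; subst h3
        exact Or.inr (Or.inr (Or.inr (Or.inr (Or.inr (Or.inl (by rw [habc, hperm]))))))
      · subst h1; subst h2; subst h3
        exact Or.inr (Or.inr (Or.inr (Or.inr (Or.inr (Or.inr (by rw [habc, hperm]))))))
  · rintro (rfl | ⟨e, rfl⟩ | ⟨e₁, e₂, rfl⟩ | ⟨e, rfl⟩ | rfl | rfl | rfl)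
    · simp
    · have := hpos e (by simp)
      simp [Multiset.sum_cons]
      linarith
    · have h1 := hpos e₁ (by simp)
      have h2 := hpos e₂ (by simp)
      simp [Multiset.sum_cons]
      linarith
    · have h1 := hpos e (by simp)
      simp [Multiset.sum_cons]
      norm_num
      linarith
    · norm_num [Multiset.sum_cons]
    · norm_num [Multiset.sum_cons]
    · norm_num [Multiset.sum_cons]

/-- Diophantine classification: for a multiset of integers all ≥ 2,
∑ (1 − 1/eᵢ) < 2 iff the multiset is ∅, {e}, {e₁,e₂}, {2,2,e}, {2,3,3}, {2,3,4} or {2,3,5}. -/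
theorem stmt0 (M : Multiset ℕ) (hM : ∀ e ∈ M, 2 ≤ e) :
    (M.map (fun e => 1 - 1 / (e : ℚ))).sum < 2 ↔
      M = 0 ∨ (∃ e, M = {e}) ∨ (∃ e₁ e₂, M = {e₁, e₂}) ∨
      (∃ e, M = {2, 2, e}) ∨ M = {2, 3, 3} ∨ M = {2, 3, 4} ∨ M = {2, 3, 5} := by
  have hconv : (M.map (fun e => 1 - 1 / (e : ℚ))).sum
      = (Multiset.map (fun e : ℕ => 1 - 1 / (e : ℚ)) M).sum := by
    show ((Multiset.bind M fun a => {((a:ℚ))}).map (fun e => 1 - 1 / e)).sum = _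
    rw [Multiset.bind_singleton, Multiset.map_map]
    rfl
  rw [hconv]
  exact stmt0aux M hM
end

section
/- Under the standard embeddings of ℍ into M₂(ℂ) (via q = a + bi + cj + dk ↦ [[a+bi, c+di],[−c+di, a−bi]]) and of M₂(ℝ) into M₂(ℂ), the intersection of the images of ℍ and M₂(ℝ) inside M₂(ℂ) is isomorphic to ℂ as an ℝ-algebra. -/
/-!
A quaternion matrix `[[a+bi, c+di], [-c+di, a-bi]]` has real entries exactly when `b = d = 0`,
and the matrices `[[a, c], [-c, a]]` that remain are the regular representation of `ℂ` over `ℝ`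
(in the basis `1, i`, evaluated at `a - ci`) pushed into `M₂(ℂ)`. That representation is an
injective `ℝ`-algebra map, so the intersection is its range, a subalgebra isomorphic to `ℂ`.
-/

open Quaternion Matrix

noncomputable section

def quaternionMatrix (q : ℍ[ℝ]) : Matrix (Fin 2) (Fin 2) ℂ :=
  !![(q.re : ℂ) + q.imI * Complex.I, (q.imJ : ℂ) + q.imK * Complex.I;
     (-q.imJ : ℂ) + q.imK * Complex.I, (q.re : ℂ) - q.imI * Complex.I]

def complexMatrix : ℂ →ₐ[ℝ] Matrix (Fin 2) (Fin 2) ℂ :=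
  Complex.ofRealAm.mapMatrix.comp (Algebra.leftMulMatrix Complex.basisOneI)

theorem complexMatrix_injective : Function.Injective complexMatrix :=
  (Matrix.map_injective Complex.ofReal_injective).comp
    (Algebra.leftMulMatrix_injective Complex.basisOneI)

theorem complexMatrix_eq_map (z : ℂ) :
    complexMatrix z = (!![z.re, -z.im; z.im, z.re] : Matrix (Fin 2) (Fin 2) ℝ).map (↑) := by
  simp [complexMatrix, Algebra.leftMulMatrix_complex, Complex.ofRealAm_coe]

theorem complexMatrix_eq_quaternionMatrix (z : ℂ) :
    complexMatrix z = quaternionMatrix ⟨z.re, 0, -z.im, 0⟩ := by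
  rw [complexMatrix_eq_map]
  ext i j
  fin_cases i <;> fin_cases j <;> simp [quaternionMatrix]

theorem quaternionMatrix_mem_range_map_ofReal_iff (q : ℍ[ℝ]) :
    quaternionMatrix q ∈ Set.range (fun m : Matrix (Fin 2) (Fin 2) ℝ => m.map (↑)) ↔
      q.imI = 0 ∧ q.imK = 0 := by
  constructor
  · rintro ⟨m, hm⟩
    have h00 := congrArg Complex.im (congrFun (congrFun hm 0) 0)
    have h01 := congrArg Complex.im (congrFun (congrFun hm 0) 1)
    simp [quaternionMatrix] at h00 h01
    exact ⟨h00.symm, h01.symm⟩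
  · rintro ⟨hI, hK⟩
    refine ⟨!![q.re, q.imJ; -q.imJ, q.re], ?_⟩
    ext i j
    fin_cases i <;> fin_cases j <;> simp [quaternionMatrix, hI, hK]

theorem quaternionMatrix_eq_complexMatrix {q : ℍ[ℝ]} (hI : q.imI = 0) (hK : q.imK = 0) :
    quaternionMatrix q = complexMatrix ⟨q.re, -q.imJ⟩ := by
  rw [complexMatrix_eq_quaternionMatrix]
  ext i j
  fin_cases i <;> fin_cases j <;> simp [quaternionMatrix, hI, hK]

theorem range_quaternionMatrix_inter_range_map_ofReal :
    Set.range quaternionMatrix ∩ Set.range (fun m : Matrix (Fin 2) (Fin 2) ℝ => m.map (↑)) =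
      Set.range complexMatrix := by
  ext x
  constructor
  · rintro ⟨⟨q, rfl⟩, hreal⟩
    obtain ⟨hI, hK⟩ := (quaternionMatrix_mem_range_map_ofReal_iff q).mp hreal
    exact ⟨_, (quaternionMatrix_eq_complexMatrix hI hK).symm⟩
  · rintro ⟨z, rfl⟩
    exact ⟨⟨_, (complexMatrix_eq_quaternionMatrix z).symm⟩, _, (complexMatrix_eq_map z).symm⟩

end

open Quaternion in
/-- Under the standard embeddings ℍ ↪ M₂(ℂ), q = a+bi+cj+dk ↦ [[a+bi, c+di],[−c+di, a−bi]],
and M₂(ℝ) ↪ M₂(ℂ) (entrywise), the intersection of the two images is an ℝ-subalgebra of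
M₂(ℂ) isomorphic to ℂ. -/
theorem stmt7
    (f : Quaternion ℝ → Matrix (Fin 2) (Fin 2) ℂ)
    (hf : ∀ q : Quaternion ℝ, f q =
      !![(q.re : ℂ) + q.imI * Complex.I, (q.imJ : ℂ) + q.imK * Complex.I;
         (-q.imJ : ℂ) + q.imK * Complex.I, (q.re : ℂ) - q.imI * Complex.I])
    (g : Matrix (Fin 2) (Fin 2) ℝ → Matrix (Fin 2) (Fin 2) ℂ)
    (hg : ∀ m, g m = m.map (fun a => (a : ℂ))) :
    ∃ S : Subalgebra ℝ (Matrix (Fin 2) (Fin 2) ℂ),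
      (S : Set (Matrix (Fin 2) (Fin 2) ℂ)) = Set.range f ∩ Set.range g ∧
      Nonempty (S ≃ₐ[ℝ] ℂ) := by
  obtain rfl : f = quaternionMatrix := funext hf
  obtain rfl : g = fun m => m.map (↑) := funext hg
  refine ⟨complexMatrix.range, ?_, ⟨(AlgEquiv.ofInjective _ complexMatrix_injective).symm⟩⟩
  rw [AlgHom.coe_range, range_quaternionMatrix_inter_range_map_ofReal]
end

section
/- Let D be a division ring, τ an automorphism of D, and let J ∈ M_n(D) be the nilpotent Jordan block with (i, i+1)-entries equal to 1 and all other entries 0. Suppose A ∈ M_n(D) satisfies A·J = J·A^τ, where A^τ is obtained by applying τ to every entry of A. Then A is upper triangular, and its entries satisfy a_{i+1, j+1} = τ^{-1}(a_{i,j}) for all 1 ≤ i, j ≤ n−1; in particular A is determined by its first row. -/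
/-!
Multiplying by the shift matrix `J` on the right moves columns one step to the right, and on the
left moves rows one step up. Comparing entries of `A * J = J * A^τ` therefore gives
`τ (a_{i+1,0}) = 0` and `τ (a_{i+1,j+1}) = a_{i,j}`; upper triangularity follows by induction on
the column index.
-/

namespace Matrix

variable {R : Type*} {n : ℕ}

def upperShift (R : Type*) [Zero R] [One R] (n : ℕ) : Matrix (Fin n) (Fin n) R :=
  of fun i j => if (i : ℕ) + 1 = j then 1 else 0

section Semiring

variable [NonAssocSemiring R]

theorem mul_upperShift_apply_zero (A : Matrix (Fin n) (Fin n) R) (i : Fin n) (h0 : 0 < n) :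
    (A * upperShift R n) i ⟨0, h0⟩ = 0 := by
  simp [mul_apply, upperShift]

theorem mul_upperShift_apply_succ (A : Matrix (Fin n) (Fin n) R) (i : Fin n) (j : ℕ)
    (hj : j + 1 < n) : (A * upperShift R n) i ⟨j + 1, hj⟩ = A i ⟨j, by omega⟩ := by
  rw [mul_apply, Finset.sum_eq_single ⟨j, by omega⟩]
  · simp [upperShift]
  · intro k _ hk
    simp [upperShift, Fin.val_ne_of_ne hk]
  · simp

theorem upperShift_mul_apply (B : Matrix (Fin n) (Fin n) R) (i : ℕ) (hi : i + 1 < n)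
    (j : Fin n) : (upperShift R n * B) ⟨i, by omega⟩ j = B ⟨i + 1, hi⟩ j := by
  rw [mul_apply, Finset.sum_eq_single ⟨i + 1, hi⟩]
  · simp [upperShift]
  · intro k _ hk
    simp [upperShift, (Fin.val_ne_of_ne hk).symm]
  · simp

variable {A B : Matrix (Fin n) (Fin n) R} (h : A * upperShift R n = upperShift R n * B)
include h

theorem apply_succ_zero_of_mul_upperShift_eq (i : ℕ) (hi : i + 1 < n) :
    B ⟨i + 1, hi⟩ ⟨0, by omega⟩ = 0 := by
  rw [← upperShift_mul_apply B i hi, ← h, mul_upperShift_apply_zero]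

theorem apply_succ_succ_of_mul_upperShift_eq (i j : ℕ) (hi : i + 1 < n) (hj : j + 1 < n) :
    B ⟨i + 1, hi⟩ ⟨j + 1, hj⟩ = A ⟨i, by omega⟩ ⟨j, by omega⟩ := by
  rw [← upperShift_mul_apply B i hi, ← h, mul_upperShift_apply_succ]

end Semiring

theorem isUpperTriangular_of_apply_succ [Zero R] {A : Matrix (Fin n) (Fin n) R}
    (hzero : ∀ (i : ℕ) (hi : i + 1 < n), A ⟨i + 1, hi⟩ ⟨0, by omega⟩ = 0)
    (hsucc : ∀ (i j : ℕ) (hi : i + 1 < n) (hj : j + 1 < n),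
      A ⟨i, by omega⟩ ⟨j, by omega⟩ = 0 → A ⟨i + 1, hi⟩ ⟨j + 1, hj⟩ = 0) :
    A.IsUpperTriangular := by
  rintro ⟨i, hi⟩ ⟨j, hj⟩ hji
  change j < i at hji
  induction j generalizing i with
  | zero =>
    obtain ⟨i, rfl⟩ : ∃ i', i = i' + 1 := Nat.exists_eq_succ_of_ne_zero (by omega)
    exact hzero i hi
  | succ j ih =>
    obtain ⟨i, rfl⟩ : ∃ i', i = i' + 1 := Nat.exists_eq_succ_of_ne_zero (by omega)
    exact hsucc i j hi hj (ih i (by omega) (by omega) (by omega))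

end Matrix

open Matrix

/-- Matrices intertwining the nilpotent Jordan block via a twist: if A·J = J·A^τ where A^τ
applies the automorphism τ entrywise, then A is upper triangular and its entries satisfy
a_{i+1,j+1} = τ⁻¹(a_{i,j}); in particular A is determined by its first row. -/
theorem stmt11 (D : Type*) [DivisionRing D] (τ : RingAut D) (n : ℕ)
    (J A : Matrix (Fin n) (Fin n) D)
    (hJ : ∀ i j : Fin n, J i j = if (i : ℕ) + 1 = (j : ℕ) then 1 else 0)
    (h : A * J = J * A.map (fun d => τ d)) :
    (∀ i j : Fin n, (j : ℕ) < (i : ℕ) → A i j = 0) ∧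
    (∀ (i j : ℕ) (hi : i + 1 < n) (hj : j + 1 < n),
      A ⟨i + 1, hi⟩ ⟨j + 1, hj⟩ =
        τ⁻¹ (A ⟨i, Nat.lt_of_succ_lt hi⟩ ⟨j, Nat.lt_of_succ_lt hj⟩)) := by
  obtain rfl : J = upperShift D n := Matrix.ext hJ
  have hsucc (i j : ℕ) (hi : i + 1 < n) (hj : j + 1 < n) :
      A ⟨i + 1, hi⟩ ⟨j + 1, hj⟩ = τ⁻¹ (A ⟨i, by omega⟩ ⟨j, by omega⟩) := by
    rw [← apply_succ_succ_of_mul_upperShift_eq h i j hi hj, map_apply, RingAut.inv_apply,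
      RingEquiv.symm_apply_apply]
  have hzero (i : ℕ) (hi : i + 1 < n) : A ⟨i + 1, hi⟩ ⟨0, by omega⟩ = 0 :=
    (map_eq_zero_iff τ τ.injective).mp (apply_succ_zero_of_mul_upperShift_eq h i hi)
  refine ⟨fun i j hji => ?_, hsucc⟩
  exact isUpperTriangular_of_apply_succ hzero
    (fun i j hi hj hij => by rw [hsucc, hij, map_zero]) hji
end

section
/- Let r, a, t, m be positive integers with r ≥ 1 and a ≥ 1, and let e_τ = a²·r/2 ≥ 1 be rational, so that 2·e_τ = r·a². Suppose t·m² = a²m²·(t − (1/2)·r·t·(1 − 1/e_τ)). Then r = 2. -/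
/-- Numerical step in the proof that a genus-zero curve with cyclic Picard-shift group is
unramified: from 2·e_τ = r·a² and t·m² = a²·m²·(t − (1/2)·r·t·(1 − 1/e_τ)) with positive
integers r, a, t, m and e_τ ≥ 1, it follows that r = 2. -/
theorem stmt15 (r a t m : ℕ) (hr : 0 < r) (ha : 0 < a) (ht : 0 < t) (hm : 0 < m)
    (eτ : ℚ) (heτ : 1 ≤ eτ)
    (h1 : 2 * eτ = (r : ℚ) * (a : ℚ) ^ 2)
    (h2 : (t : ℚ) * (m : ℚ) ^ 2 =
      (a : ℚ) ^ 2 * (m : ℚ) ^ 2 * ((t : ℚ) - (1 / 2) * r * t * (1 - 1 / eτ))) :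
    r = 2 := by
  have heτp : (0:ℚ) < eτ := by linarith
  have heτ0 : eτ ≠ 0 := ne_of_gt heτp
  have htp : (0:ℚ) < (t : ℚ) := by positivity
  have hmp : (0:ℚ) < (m : ℚ) ^ 2 := by positivity
  field_simp at h2
  have hp : (0:ℚ) < 2 * eτ * (t:ℚ) * (m:ℚ)^2 :=
    mul_pos (mul_pos (mul_pos two_pos heτp) htp) hmp
  have key : 2 * eτ * (t:ℚ) * (m:ℚ)^2 * ((a:ℚ)^2) = 2 * eτ * (t:ℚ) * (m:ℚ)^2 * eτ := by
    linear_combination (-((t:ℚ) * (m:ℚ)^2)) * h2 - ((t:ℚ) * (m:ℚ)^2 * (eτ - 1)) * h1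
  have hA : (a:ℚ)^2 = eτ := mul_left_cancel₀ (ne_of_gt hp) key
  rw [hA] at h1
  have hq : (r:ℚ) = 2 := mul_right_cancel₀ heτ0 h1.symm
  exact_mod_cast hq
end
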